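/- arXiv:2312.08690 — 4 statements merged into one kernel-verified Lean document; each statement's English description precedes it below -/
import Mathlib

section
/- In the Galerkin setting (without the matrix D and without forcing): let M : ℝ → Mat_n(ℝ) be continuous and T-periodic with ⟨M(t)ξ, ξ⟩ = 0 for all t ∈ ℝ and ξ ∈ ℝⁿ. If (a, z) : ℝ → ℝⁿ × ℝ is continuously differentiable, T-periodic (a(t+T) = a(t), z(t+T) = z(t)) and satisfies A a'(t) − M(t) a(t) + (k/ρ) z(t) β + B a(t) = 0 and z'(t) = ⟨β, a(t)⟩ for all t ∈ ℝ, then a ≡ 0 and z ≡ 0. -/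
open MeasureTheory Matrix

/-! The energy `E = (k/ρ) z² + ⟨A a, a⟩` satisfies `E' = -2 ⟨B a, a⟩ ≤ 0`: the convection term
drops out because `⟨M(t) a, a⟩ = 0`, and the spring terms cancel because `z' = ⟨β, a⟩`.
A periodic non-increasing function is constant, so `⟨B a, a⟩ ≡ 0`, whence `a ≡ 0`; the first
equation then reduces to `(k/ρ) z β = 0`, whence `z ≡ 0`. -/

theorem Function.Periodic.eq_of_antitone {f : ℝ → ℝ} {T : ℝ} (hf : Function.Periodic f T)
    (hT : 0 < T) (hanti : Antitone f) (s t : ℝ) : f s = f t := by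
  wlog hst : s ≤ t generalizing s t
  · exact (this t s (le_of_not_ge hst)).symm
  obtain ⟨N, hN⟩ := exists_nat_ge ((t - s) / T)
  have ht : t ≤ s + N * T := by linarith [(div_le_iff₀ hT).mp hN]
  have := hf.nat_mul N s
  linarith [hanti hst, hanti ht]

theorem Function.Periodic.hasDerivAt_eq_zero_of_nonpos {f f' : ℝ → ℝ} {T : ℝ}
    (hf : Function.Periodic f T) (hT : 0 < T) (hderiv : ∀ t, HasDerivAt f (f' t) t)
    (hnonpos : ∀ t, f' t ≤ 0) (t : ℝ) : f' t = 0 := by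
  have hanti : Antitone f :=
    antitone_of_deriv_nonpos (fun t => (hderiv t).differentiableAt)
      fun t => (hderiv t).deriv ▸ hnonpos t
  have hconst : f = fun _ => f 0 := funext fun s => hf.eq_of_antitone hT hanti s 0
  exact (hderiv t).unique (hconst ▸ hasDerivAt_const t (f 0))

theorem Matrix.IsSymm.mulVec_dotProduct_comm {R n : Type*} [CommSemiring R] [Fintype n]
    {A : Matrix n n R} (hA : A.IsSymm) (x y : n → R) : A *ᵥ x ⬝ᵥ y = A *ᵥ y ⬝ᵥ x := by
  rw [dotProduct_comm, dotProduct_mulVec, ← mulVec_transpose, hA.eq]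

section Derivatives

variable {𝕜 : Type*} [NontriviallyNormedField 𝕜] {n : Type*} [Fintype n]

theorem HasDerivAt.dotProduct {u v : 𝕜 → n → 𝕜} {u' v' : n → 𝕜} {t : 𝕜}
    (hu : HasDerivAt u u' t) (hv : HasDerivAt v v' t) :
    HasDerivAt (fun s => u s ⬝ᵥ v s) (u' ⬝ᵥ v t + u t ⬝ᵥ v') t :=
  (HasDerivAt.fun_sum (u := Finset.univ) fun i _ =>
    (hasDerivAt_pi.mp hu i).mul (hasDerivAt_pi.mp hv i)).congr_deriv Finset.sum_add_distrib

theorem HasDerivAt.mulVec (A : Matrix n n 𝕜) {u : 𝕜 → n → 𝕜} {u' : n → 𝕜} {t : 𝕜}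
    (hu : HasDerivAt u u' t) : HasDerivAt (fun s => A *ᵥ u s) (A *ᵥ u') t :=
  hasDerivAt_pi.mpr fun i =>
    HasDerivAt.fun_sum (u := Finset.univ) fun j _ => (hasDerivAt_pi.mp hu j).const_mul (A i j)

theorem HasDerivAt.mulVec_dotProduct_self {A : Matrix n n 𝕜}
    (hA : A.IsSymm) {u : 𝕜 → n → 𝕜} {u' : n → 𝕜} {t : 𝕜} (hu : HasDerivAt u u' t) :
    HasDerivAt (fun s => A *ᵥ u s ⬝ᵥ u s) (2 * (A *ᵥ u' ⬝ᵥ u t)) t := by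
  refine ((hu.mulVec A).dotProduct hu).congr_deriv ?_
  rw [hA.mulVec_dotProduct_comm (u t) u']
  ring

end Derivatives

theorem isSymm_one_add_smul_vecMulVec_self {R n : Type*} [CommSemiring R] [DecidableEq n]
    (c : R) (β : n → R) : (1 + c • vecMulVec β β).IsSymm :=
  isSymm_one.add (IsSymm.smul (A := vecMulVec β β) (transpose_vecMulVec β β) c)

theorem hasDerivAt_galerkin_energy {n : Type*} [Fintype n] {A B M : Matrix n n ℝ}
    (hA : A.IsSymm) (hM : ∀ ξ, M *ᵥ ξ ⬝ᵥ ξ = 0) {c : ℝ} {β : n → ℝ}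
    {a : ℝ → n → ℝ} {z : ℝ → ℝ} {a' : n → ℝ} {z' t : ℝ}
    (ha : HasDerivAt a a' t) (hz : HasDerivAt z z' t)
    (heq : A *ᵥ a' - M *ᵥ a t + (c * z t) • β + B *ᵥ a t = 0) (heq' : z' = β ⬝ᵥ a t) :
    HasDerivAt (fun s => c * z s ^ 2 + A *ᵥ a s ⬝ᵥ a s) (-2 * (B *ᵥ a t ⬝ᵥ a t)) t := by
  subst heq'
  have hpower : A *ᵥ a' ⬝ᵥ a t = -(c * z t * (β ⬝ᵥ a t)) - B *ᵥ a t ⬝ᵥ a t := by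
    have h := congrArg (· ⬝ᵥ a t) heq
    simp only [add_dotProduct, sub_dotProduct, smul_dotProduct, zero_dotProduct, smul_eq_mul,
      hM] at h
    linarith
  refine (((hz.pow 2).const_mul c).add (ha.mulVec_dotProduct_self hA)).congr_deriv ?_
  rw [hpower]
  ring

theorem homogeneous_linearized_galerkin_trivial_general
    (n : ℕ) (hn : 0 < n) (T ρ m k : ℝ)
    (hT : 0 < T) (hρ : 0 < ρ) (hk : 0 < k)
    (β : Fin n → ℝ) (hβ : 0 < β ⟨0, hn⟩)
    (B : Matrix (Fin n) (Fin n) ℝ) (hB : B.PosDef)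
    (M : ℝ → Matrix (Fin n) (Fin n) ℝ)
    (hM0 : ∀ t ξ, (M t).mulVec ξ ⬝ᵥ ξ = 0)
    (a : ℝ → Fin n → ℝ) (z : ℝ → ℝ)
    (ha : ContDiff ℝ 1 a) (hz : ContDiff ℝ 1 z)
    (haper : ∀ t, a (t + T) = a t) (hzper : ∀ t, z (t + T) = z t)
    (heq : ∀ t,
      ((1 : Matrix (Fin n) (Fin n) ℝ) + (m / ρ) • vecMulVec β β).mulVec (deriv a t)
        - (M t).mulVec (a t) + ((k / ρ) * z t) • β + B.mulVec (a t) = 0)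
    (heq' : ∀ t, deriv z t = β ⬝ᵥ a t) :
    (∀ t, a t = 0) ∧ (∀ t, z t = 0) := by
  set A : Matrix (Fin n) (Fin n) ℝ := 1 + (m / ρ) • vecMulVec β β
  set E : ℝ → ℝ := fun s => k / ρ * z s ^ 2 + A *ᵥ a s ⬝ᵥ a s
  have hE : ∀ t, HasDerivAt E (-2 * (B *ᵥ a t ⬝ᵥ a t)) t := fun t =>
    hasDerivAt_galerkin_energy (isSymm_one_add_smul_vecMulVec_self (m / ρ) β) (hM0 t)
      (ha.differentiable one_ne_zero t).hasDerivAt (hz.differentiable one_ne_zero t).hasDerivAt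
      (heq t) (heq' t)
  have hperiodic : Function.Periodic E T := fun s => by simp only [E, haper, hzper]
  have hBq : ∀ x, 0 ≤ B *ᵥ x ⬝ᵥ x := fun x => by
    simpa [dotProduct_comm] using hB.posSemidef.dotProduct_mulVec_nonneg x
  have ha0 : ∀ t, a t = 0 := fun t => by
    by_contra hne
    have hzero := hperiodic.hasDerivAt_eq_zero_of_nonpos hT hE (fun s => by linarith [hBq (a s)]) t
    have hpos := hB.dotProduct_mulVec_pos hne
    rw [star_trivial, dotProduct_comm] at hpos
    linarith
  refine ⟨ha0, fun t => ?_⟩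
  have hda : deriv a t = 0 := by rw [show a = fun _ => 0 from funext ha0, deriv_const]
  have h := heq t
  simp only [hda, ha0 t, mulVec_zero, sub_zero, zero_add, add_zero, smul_eq_zero] at h
  have hβ0 : β ≠ 0 := fun h0 => hβ.ne' (congrFun h0 _)
  simpa [hρ.ne', hk.ne', hβ0] using h

/-- In the Galerkin setting, the homogeneous linearized Galerkin system
`A a' − M(t) a + (k/ρ) z β + B a = 0`, `z' = ⟨β, a⟩` (with `⟨M(t)ξ, ξ⟩ = 0`) has only the
trivial `T`-periodic solution. -/
theorem homogeneous_linearized_galerkin_trivial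
    (n : ℕ) (hn : 0 < n) (T ρ m k : ℝ)
    (hT : 0 < T) (hρ : 0 < ρ) (hm : 0 < m) (hk : 0 < k)
    (β : Fin n → ℝ) (hβ : 0 < β ⟨0, hn⟩)
    (B : Matrix (Fin n) (Fin n) ℝ) (hB : B.PosDef)
    (M : ℝ → Matrix (Fin n) (Fin n) ℝ)
    (hMcont : Continuous M) (hMper : ∀ t, M (t + T) = M t)
    (hM0 : ∀ t ξ, (M t).mulVec ξ ⬝ᵥ ξ = 0)
    (a : ℝ → Fin n → ℝ) (z : ℝ → ℝ)
    (ha : ContDiff ℝ 1 a) (hz : ContDiff ℝ 1 z)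
    (haper : ∀ t, a (t + T) = a t) (hzper : ∀ t, z (t + T) = z t)
    (heq : ∀ t,
      ((1 : Matrix (Fin n) (Fin n) ℝ) + (m / ρ) • vecMulVec β β).mulVec (deriv a t)
        - (M t).mulVec (a t) + ((k / ρ) * z t) • β + B.mulVec (a t) = 0)
    (heq' : ∀ t, deriv z t = β ⬝ᵥ a t) :
    (∀ t, a t = 0) ∧ (∀ t, z t = 0) :=
  homogeneous_linearized_galerkin_trivial_general n hn T ρ m k hT hρ hk β hβ B hB M hM0 a z ha hz
    haper hzper heq heq'
end

section
/- Let H be a real inner product space, let ρ, m, k, β₁ be positive real numbers, let ψ₁ ∈ H, and let δ > 0 satisfy δ ≤ 1, δ‖ψ₁‖ ≤ 1, δβ₁ ≤ 1 and δ(ρ‖ψ₁‖ + mβ₁) ≤ k. For v ∈ H and w, z ∈ ℝ define E := (1/2)(ρ‖v‖² + m w² + k z²) and G := ρ‖v‖² + m w² + k z² + δρ z ⟨v, ψ₁⟩ + δ m β₁ z w. Then E ≤ G ≤ 3E. -/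
/-!
Write `G = 2E + C` with the coupling `C = δρ z⟨v, ψ₁⟩ + δmβ₁ z w`; both claims amount to `|C| ≤ E`.
By Cauchy–Schwarz and `2ab ≤ a² + b²`, each cross term is dominated by half a sum of squares, and
the smallness conditions on `δ` make the resulting quadratic form at most `E` coefficient by
coefficient.
-/

open scoped RealInnerProductSpace

lemma abs_mul_le_add_sq_div_two (z w : ℝ) : |z * w| ≤ (z ^ 2 + w ^ 2) / 2 := by
  have h := two_mul_le_add_sq |z| |w|
  rw [sq_abs, sq_abs] at h
  rw [abs_mul]
  linarith

lemma abs_mul_inner_le_norm_mul_add_sq_div_two {H : Type*} [NormedAddCommGroup H]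
    [InnerProductSpace ℝ H] (z : ℝ) (v ψ : H) :
    |z * ⟪v, ψ⟫| ≤ ‖ψ‖ * ((z ^ 2 + ‖v‖ ^ 2) / 2) :=
  calc |z * ⟪v, ψ⟫| = |z| * |⟪v, ψ⟫| := abs_mul _ _
    _ ≤ |z| * (‖v‖ * ‖ψ‖) := by gcongr; exact abs_real_inner_le_norm v ψ
    _ = ‖ψ‖ * |z * ‖v‖| := by rw [abs_mul, abs_norm]; ring
    _ ≤ ‖ψ‖ * ((z ^ 2 + ‖v‖ ^ 2) / 2) := by gcongr; exact abs_mul_le_add_sq_div_two z ‖v‖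

theorem abs_coupling_le_half_energy {H : Type*} [NormedAddCommGroup H] [InnerProductSpace ℝ H]
    {ρ m k β₁ δ : ℝ} {ψ₁ : H} (hρ : 0 ≤ ρ) (hm : 0 ≤ m) (hβ₁ : 0 ≤ β₁) (hδ : 0 ≤ δ)
    (hδψ₁ : δ * ‖ψ₁‖ ≤ 1) (hδβ₁ : δ * β₁ ≤ 1) (hδk : δ * (ρ * ‖ψ₁‖ + m * β₁) ≤ k)
    (v : H) (w z : ℝ) :
    |δ * ρ * z * ⟪v, ψ₁⟫ + δ * m * β₁ * z * w| ≤
      (1 / 2) * (ρ * ‖v‖ ^ 2 + m * w ^ 2 + k * z ^ 2) :=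
  calc |δ * ρ * z * ⟪v, ψ₁⟫ + δ * m * β₁ * z * w|
      = |(δ * ρ) * (z * ⟪v, ψ₁⟫) + (δ * m * β₁) * (z * w)| := by ring_nf
    _ ≤ (δ * ρ) * |z * ⟪v, ψ₁⟫| + (δ * m * β₁) * |z * w| := by
        refine (abs_add_le _ _).trans_eq ?_
        rw [abs_mul, abs_mul (δ * m * β₁), abs_of_nonneg (by positivity),
          abs_of_nonneg (a := δ * m * β₁) (by positivity)]
    _ ≤ (δ * ρ) * (‖ψ₁‖ * ((z ^ 2 + ‖v‖ ^ 2) / 2)) + (δ * m * β₁) * ((z ^ 2 + w ^ 2) / 2) := by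
        gcongr
        · exact abs_mul_inner_le_norm_mul_add_sq_div_two z v ψ₁
        · exact abs_mul_le_add_sq_div_two z w
    _ = (1 / 2) * (ρ * (δ * ‖ψ₁‖) * ‖v‖ ^ 2 + m * (δ * β₁) * w ^ 2
          + δ * (ρ * ‖ψ₁‖ + m * β₁) * z ^ 2) := by ring
    _ ≤ (1 / 2) * (ρ * 1 * ‖v‖ ^ 2 + m * 1 * w ^ 2 + k * z ^ 2) := by gcongr
    _ = (1 / 2) * (ρ * ‖v‖ ^ 2 + m * w ^ 2 + k * z ^ 2) := by ring

theorem natural_and_particular_energy_equivalent_general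
    {H : Type*} [NormedAddCommGroup H] [InnerProductSpace ℝ H]
    (ρ m k β₁ : ℝ) (hρ : 0 < ρ) (hm : 0 < m) (hβ₁ : 0 < β₁)
    (ψ₁ : H) (δ : ℝ) (hδ : 0 < δ)
    (hδ2 : δ * ‖ψ₁‖ ≤ 1) (hδ3 : δ * β₁ ≤ 1)
    (hδ4 : δ * (ρ * ‖ψ₁‖ + m * β₁) ≤ k)
    (v : H) (w z : ℝ) :
    (1 / 2) * (ρ * ‖v‖ ^ 2 + m * w ^ 2 + k * z ^ 2) ≤
        ρ * ‖v‖ ^ 2 + m * w ^ 2 + k * z ^ 2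
          + δ * ρ * z * (inner ℝ v ψ₁ : ℝ) + δ * m * β₁ * z * w ∧
      ρ * ‖v‖ ^ 2 + m * w ^ 2 + k * z ^ 2
          + δ * ρ * z * (inner ℝ v ψ₁ : ℝ) + δ * m * β₁ * z * w ≤
        3 * ((1 / 2) * (ρ * ‖v‖ ^ 2 + m * w ^ 2 + k * z ^ 2)) := by
  have hC := abs_le.mp <|
    abs_coupling_le_half_energy hρ.le hm.le hβ₁.le hδ.le hδ2 hδ3 hδ4 v w z
  constructor <;> linarith [hC.1, hC.2]

/-- Equivalence of the natural energy `E` and the modified ('particular')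
energy `G` for `δ` small enough: `E ≤ G ≤ 3E`. -/
theorem natural_and_particular_energy_equivalent
    {H : Type*} [NormedAddCommGroup H] [InnerProductSpace ℝ H]
    (ρ m k β₁ : ℝ) (hρ : 0 < ρ) (hm : 0 < m) (hk : 0 < k) (hβ₁ : 0 < β₁)
    (ψ₁ : H) (δ : ℝ) (hδ : 0 < δ)
    (hδ1 : δ ≤ 1) (hδ2 : δ * ‖ψ₁‖ ≤ 1) (hδ3 : δ * β₁ ≤ 1)
    (hδ4 : δ * (ρ * ‖ψ₁‖ + m * β₁) ≤ k)
    (v : H) (w z : ℝ) :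
    (1 / 2) * (ρ * ‖v‖ ^ 2 + m * w ^ 2 + k * z ^ 2) ≤
        ρ * ‖v‖ ^ 2 + m * w ^ 2 + k * z ^ 2
          + δ * ρ * z * (inner ℝ v ψ₁ : ℝ) + δ * m * β₁ * z * w ∧
      ρ * ‖v‖ ^ 2 + m * w ^ 2 + k * z ^ 2
          + δ * ρ * z * (inner ℝ v ψ₁ : ℝ) + δ * m * β₁ * z * w ≤
        3 * ((1 / 2) * (ρ * ‖v‖ ^ 2 + m * w ^ 2 + k * z ^ 2)) :=
  natural_and_particular_energy_equivalent_general ρ m k β₁ hρ hm hβ₁ ψ₁ δ hδ hδ2 hδ3 hδ4 v w z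
end

section
/- Let T > 0 and c > 0. Let u : ℝ → ℝ be continuous, nonnegative and T-periodic, and let h : ℝ → ℝ be nonnegative, T-periodic and integrable on [0, T]. Assume that for all real s ≤ t one has u(t) ≤ u(s) + ∫ₛᵗ (h(τ) − c u(τ)) dτ. Then for every t ∈ ℝ, u(t) ≤ (1 + 1/(cT)) ∫₀ᵀ h(τ) dτ. -/
open MeasureTheory

/-- Periodic Gronwall-type estimate: if a continuous nonnegative
`T`-periodic function `u` satisfies the integral inequality
`u(t) ≤ u(s) + ∫ₛᵗ (h − c u)` for all `s ≤ t`, with `h ≥ 0` `T`-periodic and integrable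
on `[0,T]`, then `u ≤ (1 + 1/(cT)) ∫₀ᵀ h` everywhere. -/
theorem periodic_gronwall_bound
    (T c : ℝ) (hT : 0 < T) (hc : 0 < c)
    (u h : ℝ → ℝ)
    (hu_cont : Continuous u) (hu_nonneg : ∀ t, 0 ≤ u t)
    (hu_per : ∀ t, u (t + T) = u t)
    (hh_nonneg : ∀ t, 0 ≤ h t) (hh_per : ∀ t, h (t + T) = h t)
    (hh_int : IntervalIntegrable h volume 0 T)
    (hineq : ∀ s t : ℝ, s ≤ t → u t ≤ u s + ∫ τ in s..t, (h τ - c * u τ)) :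
    ∀ t, u t ≤ (1 + 1 / (c * T)) * ∫ τ in (0:ℝ)..T, h τ := by
  have hper : Function.Periodic h T := hh_per
  have huper : Function.Periodic u T := hu_per
  set H : ℝ := ∫ τ in (0:ℝ)..T, h τ with hH
  -- integrability of h on [0, 2T]
  have hh_int2 : IntervalIntegrable h volume T (T + T) := by
    have := hh_int.comp_sub_right T
    have heq : (fun x => h (x - T)) = h := by
      funext x
      have := hh_per (x - T)
      simp at this
      linarith
    simpa [heq] using this
  have hh_int02 : IntervalIntegrable h volume 0 (T + T) := hh_int.trans hh_int2
  -- integrability of u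
  have hu_int : ∀ a b : ℝ, IntervalIntegrable u volume a b := fun a b =>
    hu_cont.intervalIntegrable a b
  have hcu_int : ∀ a b : ℝ, IntervalIntegrable (fun τ => c * u τ) volume a b := fun a b =>
    (continuous_const.mul hu_cont).intervalIntegrable a b
  -- step 1 : c ∫₀ᵀ u ≤ H
  have step1 : c * ∫ τ in (0:ℝ)..T, u τ ≤ H := by
    have h1 := hineq 0 T hT.le
    have huT : u T = u 0 := by simpa using hu_per 0
    rw [intervalIntegral.integral_sub hh_int (hcu_int 0 T),
      intervalIntegral.integral_const_mul, huT] at h1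
    linarith
  -- step 2 : the minimum point t₀
  obtain ⟨t₀, ht₀mem, ht₀min⟩ :=
    isCompact_Icc.exists_isMinOn (Set.nonempty_Icc.2 hT.le) (hu_cont.continuousOn (s := Set.Icc 0 T))
  have hmin_le : u t₀ * T ≤ ∫ τ in (0:ℝ)..T, u τ := by
    have : (∫ _ in (0:ℝ)..T, u t₀) ≤ ∫ τ in (0:ℝ)..T, u τ :=
      intervalIntegral.integral_mono_on hT.le (intervalIntegrable_const) (hu_int 0 T)
        (fun x hx => ht₀min hx)
    simpa [mul_comm] using this
  have hHnn : 0 ≤ H := by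
    apply intervalIntegral.integral_nonneg hT.le
    intro x _; exact hh_nonneg x
  have ht₀bound : u t₀ ≤ H / (c * T) := by
    rw [le_div_iff₀ (by positivity)]
    calc u t₀ * (c * T) = c * (u t₀ * T) := by ring
      _ ≤ c * ∫ τ in (0:ℝ)..T, u τ := mul_le_mul_of_nonneg_left hmin_le hc.le
      _ ≤ H := step1
  -- step 3 : the bound for arbitrary t
  intro t
  set n : ℤ := ⌊(t - t₀) / T⌋ with hn
  set t' : ℝ := t - n * T with ht'
  have hnt : (n : ℝ) * T ≤ t - t₀ := by
    have := Int.floor_le ((t - t₀) / T)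
    rwa [le_div_iff₀ hT] at this
  have hnt2 : t - t₀ < ((n : ℝ) + 1) * T := by
    have := Int.lt_floor_add_one ((t - t₀) / T)
    rwa [div_lt_iff₀ hT] at this
  have h1 : t₀ ≤ t' := by rw [ht']; linarith
  have h2 : t' ≤ t₀ + T := by rw [ht']; nlinarith
  have hut : u t = u t' := (huper.sub_int_mul_eq n).symm
  -- intervals [t₀, t'] and [t₀, t₀+T] are contained in [0, T+T]
  have hsub : Set.uIcc t₀ (t₀ + T) ⊆ Set.uIcc (0:ℝ) (T + T) := by
    rw [Set.uIcc_of_le (by linarith [ht₀mem.1] : t₀ ≤ t₀ + T),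
      Set.uIcc_of_le (by linarith : (0:ℝ) ≤ T + T)]
    exact Set.Icc_subset_Icc (ht₀mem.1) (by linarith [ht₀mem.2])
  have hh_intA : IntervalIntegrable h volume t₀ (t₀ + T) := hh_int02.mono_set hsub
  have hh_intB : IntervalIntegrable h volume t₀ t' := hh_intA.mono_set (by
    rw [Set.uIcc_of_le h1, Set.uIcc_of_le (by linarith : t₀ ≤ t₀ + T)]
    exact Set.Icc_subset_Icc le_rfl h2)
  have key : u t' ≤ u t₀ + H := by
    have hA := hineq t₀ t' h1
    have hB : (∫ τ in t₀..t', (h τ - c * u τ)) ≤ ∫ τ in t₀..t', h τ := by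
      apply intervalIntegral.integral_mono_on h1 (hh_intB.sub (hcu_int t₀ t')) hh_intB
      intro x _
      nlinarith [hu_nonneg x]
    have hC : (∫ τ in t₀..t', h τ) ≤ ∫ τ in t₀..(t₀ + T), h τ :=
      intervalIntegral.integral_mono_interval le_rfl h1 h2
        (Filter.Eventually.of_forall fun x => hh_nonneg x) hh_intA
    have hD : (∫ τ in t₀..(t₀ + T), h τ) = H := by
      simpa using hper.intervalIntegral_add_eq t₀ 0
    linarith
  calc u t = u t' := hut
    _ ≤ u t₀ + H := key
    _ ≤ H / (c * T) + H := by linarith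
    _ = (1 + 1 / (c * T)) * H := by field_simp; ring
end

section
/- Let T > 0 and c > 0. Let G : ℝ → ℝ be continuous, nonnegative and T-periodic, and let h : ℝ → ℝ be nonnegative, T-periodic and integrable on [0, T]. Assume that for all real s ≤ t one has G(t) ≤ G(s) + ∫ₛᵗ (2√(G(τ)) h(τ) − 2c G(τ)) dτ. Then for every t ∈ ℝ, √(G(t)) ≤ (1 + 1/(cT)) ∫₀ᵀ h(τ) dτ. -/
/-!
Multiplied by `exp (c t)`, the inequality `(√G)' + c √G ≤ h` says that
`exp (c t) √G(t) - ∫ exp (c τ) h τ` is nonincreasing. As `G` only satisfies an integral inequality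
and `h` is merely integrable, this is proved by comparison: the solution `Φ` of `Φ' + c Φ = h + ε`
starting strictly above `√G` is absolutely continuous with `(Φ²)' = 2 Φ (h + ε) - 2 c Φ²` a.e.,
and near a first contact point of `G` with `Φ²` this identity strictly beats the integral
inequality for `G`. Over one period it gives `exp (c T) √G(t) ≤ √G(t) + exp (c T) ∫₀ᵀ h`, and
`exp (c T) - 1 ≥ c T` turns this into the bound.
-/

open MeasureTheory Set Filter Topology Real

theorem AbsolutelyContinuousOnInterval.integral_eq_sub_of_ae_hasDerivAt {f f' : ℝ → ℝ}
    {a b : ℝ} (hf : AbsolutelyContinuousOnInterval f a b)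
    (hf' : ∀ᵐ x, x ∈ uIcc a b → HasDerivAt f (f' x) x) :
    ∫ x in a..b, f' x = f b - f a := by
  rw [← hf.integral_deriv_eq_sub]
  refine intervalIntegral.integral_congr_ae ?_
  filter_upwards [hf'] with x hx hxab
  exact (hx (uIoc_subset_uIcc hxab)).deriv.symm

theorem locallyIntegrable_of_forall_intervalIntegrable {f : ℝ → ℝ}
    (hf : ∀ a b, IntervalIntegrable f volume a b) : LocallyIntegrable f volume := fun x =>
  ⟨Icc (x - 1) (x + 1), Icc_mem_nhds (by linarith) (by linarith),
    (intervalIntegrable_iff_integrableOn_Icc_of_le (by linarith)).mp (hf _ _)⟩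

namespace MeasureTheory.LocallyIntegrable

variable {f : ℝ → ℝ}

theorem intervalIntegrable (hf : LocallyIntegrable f volume) (a b : ℝ) :
    IntervalIntegrable f volume a b :=
  (hf.integrableOn_isCompact isCompact_uIcc).intervalIntegrable

theorem absolutelyContinuousOnInterval_integral (hf : LocallyIntegrable f volume) (s a b : ℝ) :
    AbsolutelyContinuousOnInterval (fun x => ∫ t in s..x, f t) a b := by
  have hle : min s (min a b) ≤ max s (max a b) := by grind
  refine ((hf.intervalIntegrable (min s (min a b)) (max s (max a b))
    ).absolutelyContinuousOnInterval_intervalIntegral ?_).mono ?_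
  · rw [uIcc_of_le hle]; constructor <;> grind
  · rw [uIcc_of_le hle]
    exact uIcc_subset_Icc (by constructor <;> grind) (by constructor <;> grind)

end MeasureTheory.LocallyIntegrable

theorem forall_Icc_lt_of_no_first_contact {α β : Type*} [ConditionallyCompleteLinearOrder α]
    [DenselyOrdered α] [TopologicalSpace α] [OrderTopology α] [LinearOrder β]
    [TopologicalSpace β] [OrderClosedTopology β] {f g : α → β} {s t : α}
    (hf : Continuous f) (hg : Continuous g) (hs : f s < g s)
    (hcontact : ∀ r ∈ Ioc s t, (∀ τ ∈ Ico s r, f τ < g τ) → f r ≠ g r) :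
    ∀ τ ∈ Icc s t, f τ < g τ := by
  by_contra! hbad
  set S := Icc s t ∩ {τ | g τ ≤ f τ}
  have hbdd : BddBelow S := ⟨s, fun τ hτ => hτ.1.1⟩
  obtain ⟨⟨hsr, hrt⟩, hgf⟩ : sInf S ∈ S :=
    (isClosed_Icc.inter (isClosed_le hg hf)).csInf_mem hbad hbdd
  have hbelow : ∀ τ ∈ Ico s (sInf S), f τ < g τ := fun τ hτ =>
    lt_of_not_ge fun hτS => (csInf_le hbdd ⟨⟨hτ.1, hτ.2.le.trans hrt⟩, hτS⟩).not_gt hτ.2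
  have hsr' : s < sInf S := hsr.lt_of_ne (by rintro hsS; rw [← hsS] at hgf; exact hgf.not_gt hs)
  have hfg : f (sInf S) ≤ g (sInf S) :=
    ContinuousWithinAt.closure_le (by rw [closure_Ico hsr'.ne]; exact ⟨hsr, le_rfl⟩)
      hf.continuousWithinAt hg.continuousWithinAt fun τ hτ => (hbelow τ hτ).le
  exact hcontact _ ⟨hsr', hrt⟩ hbelow (hfg.antisymm hgf)

/-- Variation of constants: the solution of `Φ' + c Φ = k` with `Φ s = exp (-(c * s)) * A`. -/
noncomputable def dampedPrimitive (c s A : ℝ) (k : ℝ → ℝ) (τ : ℝ) : ℝ :=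
  exp (-(c * τ)) * (A + ∫ x in s..τ, exp (c * x) * k x)

namespace dampedPrimitive

variable {c s A : ℝ} {k : ℝ → ℝ}

theorem apply_self : dampedPrimitive c s A k s = exp (-(c * s)) * A := by
  simp [dampedPrimitive]

theorem exp_mul_apply (τ : ℝ) :
    exp (c * τ) * dampedPrimitive c s A k τ = A + ∫ x in s..τ, exp (c * x) * k x := by
  rw [dampedPrimitive, ← mul_assoc, ← exp_add, add_neg_cancel, exp_zero, one_mul]

theorem pos (hA : 0 < A) (hk : ∀ x, 0 ≤ k x) {τ : ℝ} (hτ : s ≤ τ) :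
    0 < dampedPrimitive c s A k τ :=
  mul_pos (exp_pos _) (add_pos_of_pos_of_nonneg hA
    (intervalIntegral.integral_nonneg hτ fun x _ => mul_nonneg (exp_pos _).le (hk x)))

variable (hk : LocallyIntegrable k volume)
include hk

theorem absolutelyContinuousOnInterval (a b : ℝ) :
    AbsolutelyContinuousOnInterval (dampedPrimitive c s A k) a b :=
  (ContDiffOn.absolutelyContinuousOnInterval (by fun_prop)).fun_mul
    ((ContDiffOn.absolutelyContinuousOnInterval contDiffOn_const).fun_add
      ((hk.continuous_mul (by fun_prop)).absolutelyContinuousOnInterval_integral s a b))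

theorem continuous : Continuous (dampedPrimitive c s A k) :=
  (by fun_prop : Continuous fun τ => exp (-(c * τ))).mul (continuous_const.add
    (intervalIntegral.continuous_primitive
      (hk.continuous_mul (by fun_prop)).intervalIntegrable s))

theorem ae_hasDerivAt : ∀ᵐ x, HasDerivAt (dampedPrimitive c s A k)
    (k x - c * dampedPrimitive c s A k x) x := by
  filter_upwards [LocallyIntegrable.ae_hasDerivAt_integral
    (hk.continuous_mul (g := fun x => exp (c * x)) (by fun_prop))] with x hx
  have hexp : HasDerivAt (fun τ => exp (-(c * τ))) (-c * exp (-(c * x))) x := by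
    simpa [mul_comm] using ((hasDerivAt_id x).const_mul c).neg.exp
  refine (hexp.fun_mul ((hx s).const_add A)).congr_deriv ?_
  rw [dampedPrimitive, ← mul_assoc, mul_comm _ (exp (c * x)), ← mul_assoc, ← exp_add,
    add_neg_cancel, exp_zero]
  ring

theorem sq_sub_sq (a b : ℝ) :
    dampedPrimitive c s A k b ^ 2 - dampedPrimitive c s A k a ^ 2
      = ∫ τ in a..b, 2 * dampedPrimitive c s A k τ
          * (k τ - c * dampedPrimitive c s A k τ) := by
  have hac := absolutelyContinuousOnInterval (c := c) (s := s) (A := A) hk a b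
  rw [sq, sq, ← (hac.fun_mul hac).integral_eq_sub_of_ae_hasDerivAt]
  filter_upwards [ae_hasDerivAt hk] with x hx _
  exact (hx.fun_mul hx).congr_deriv (by ring)

end dampedPrimitive

theorem two_mul_sqrt_mul_sub_le {c δ g φ η : ℝ} (hφ : 0 ≤ φ) (hη : 0 ≤ η) (hgφ : g ≤ φ ^ 2)
    (hgap : c * (φ ^ 2 - g) ≤ δ * φ) :
    2 * √g * η - 2 * c * g ≤ 2 * φ * (η + δ - c * φ) := by
  have hsqrt : √g ≤ φ := sqrt_le_iff.mpr ⟨hφ, hgφ⟩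
  nlinarith [mul_le_mul_of_nonneg_right hsqrt hη]

theorem forall_Icc_lt_sq_of_integral_le {c δ s t : ℝ} {G h Φ : ℝ → ℝ} (hδ : 0 < δ)
    (hG : Continuous G) (hh : LocallyIntegrable h volume) (hh0 : ∀ x, 0 ≤ h x)
    (hineq : ∀ a b : ℝ, a ≤ b →
      G b ≤ G a + ∫ τ in a..b, (2 * √(G τ) * h τ - 2 * c * G τ))
    (hΦ : Continuous Φ) (hΦpos : ∀ τ ∈ Icc s t, 0 < Φ τ)
    (hΦsq : ∀ a b, Φ b ^ 2 - Φ a ^ 2 = ∫ τ in a..b, 2 * Φ τ * (h τ + δ - c * Φ τ))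
    (hs : G s < Φ s ^ 2) : ∀ τ ∈ Icc s t, G τ < Φ τ ^ 2 := by
  refine forall_Icc_lt_of_no_first_contact hG (hΦ.pow 2) hs fun r hr hbelow hcontact => ?_
  have hnear : ∀ᶠ τ in 𝓝 r, c * (Φ τ ^ 2 - G τ) < δ * Φ τ := by
    refine ContinuousAt.eventually_lt (by fun_prop) (by fun_prop) ?_
    rw [hcontact, sub_self, mul_zero]
    exact mul_pos hδ (hΦpos r (Ioc_subset_Icc_self hr))
  obtain ⟨l, hlr, hl⟩ := exists_Ioc_subset_of_mem_nhds hnear ⟨s, hr.1⟩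
  set s' := max s l
  have hs'r : s' < r := max_lt hr.1 hlr
  have hcmp : ∀ τ ∈ Ioo s' r,
      2 * √(G τ) * h τ - 2 * c * G τ ≤ 2 * Φ τ * (h τ + δ - c * Φ τ) := fun τ hτ =>
    have hτs : τ ∈ Ico s r := ⟨(le_max_left s l).trans hτ.1.le, hτ.2⟩
    two_mul_sqrt_mul_sub_le (hΦpos τ ⟨hτs.1, hτs.2.le.trans hr.2⟩).le (hh0 τ)
      (hbelow τ hτs).le (hl ⟨(le_max_right s l).trans_lt hτ.1, hτ.2.le⟩).le
  have hGint : IntervalIntegrable (fun τ => 2 * √(G τ) * h τ - 2 * c * G τ) volume s' r :=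
    ((hh.intervalIntegrable s' r).continuousOn_mul (by fun_prop)).sub
      ((by fun_prop : Continuous fun τ => 2 * c * G τ).intervalIntegrable _ _)
  have hΦint : IntervalIntegrable (fun τ => 2 * Φ τ * (h τ + δ - c * Φ τ)) volume s' r :=
    (((hh.intervalIntegrable s' r).add intervalIntegrable_const).sub
      ((by fun_prop : Continuous fun τ => c * Φ τ).intervalIntegrable _ _)).continuousOn_mul
      (by fun_prop)
  have hlt : G r < Φ r ^ 2 := calc
    G r ≤ G s' + ∫ τ in s'..r, (2 * √(G τ) * h τ - 2 * c * G τ) := hineq s' r hs'r.le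
    _ ≤ G s' + (Φ r ^ 2 - Φ s' ^ 2) := by
      rw [hΦsq]
      gcongr
      exact intervalIntegral.integral_mono_on_of_le_Ioo hs'r.le hGint hΦint hcmp
    _ < Φ r ^ 2 := by linarith [hbelow s' ⟨le_max_left s l, hs'r⟩]
  exact hlt.ne hcontact

theorem exp_mul_sqrt_le_add_integral {c s t : ℝ} {G h : ℝ → ℝ} (hG : Continuous G)
    (hh : LocallyIntegrable h volume) (hh0 : ∀ x, 0 ≤ h x)
    (hineq : ∀ a b : ℝ, a ≤ b →
      G b ≤ G a + ∫ τ in a..b, (2 * √(G τ) * h τ - 2 * c * G τ)) (hst : s ≤ t) :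
    exp (c * t) * √(G t) ≤ exp (c * s) * √(G s) + ∫ τ in s..t, exp (c * τ) * h τ := by
  set C := ∫ τ in s..t, exp (c * τ)
  have hC : 0 ≤ C := intervalIntegral.integral_nonneg hst fun τ _ => (exp_pos _).le
  suffices hε : ∀ ε > 0, exp (c * t) * √(G t)
      ≤ exp (c * s) * √(G s) + (∫ τ in s..t, exp (c * τ) * h τ) + ε * (1 + C) by
    refine le_of_forall_pos_le_add fun η hη => ?_
    simpa [div_mul_cancel₀ η (by positivity : (1 + C) ≠ 0)] using hε (η / (1 + C)) (by positivity)
  intro ε hε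
  set A := exp (c * s) * √(G s) + ε
  set Φ := dampedPrimitive c s A (fun x => h x + ε)
  have hk : LocallyIntegrable (fun x => h x + ε) volume := hh.add (locallyIntegrable_const ε)
  have hΦpos : ∀ τ ∈ Icc s t, 0 < Φ τ := fun τ hτ =>
    dampedPrimitive.pos (by positivity) (fun x => by linarith [hh0 x]) hτ.1
  have hGs : G s < Φ s ^ 2 := by
    have hΦs : Φ s = √(G s) + exp (-(c * s)) * ε := by
      rw [show Φ s = _ from dampedPrimitive.apply_self, mul_add, ← mul_assoc, ← exp_add,
        neg_add_cancel, exp_zero, one_mul]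
    rw [hΦs]
    nlinarith [sq_sqrt' (x := G s), le_max_left (G s) 0, sqrt_nonneg (G s),
      mul_pos (exp_pos (-(c * s))) hε]
  have hGt : G t < Φ t ^ 2 := forall_Icc_lt_sq_of_integral_le hε hG hh hh0 hineq
    (dampedPrimitive.continuous hk) hΦpos (dampedPrimitive.sq_sub_sq hk) hGs t ⟨hst, le_rfl⟩
  have hsqrt : √(G t) ≤ Φ t := sqrt_le_iff.mpr ⟨(hΦpos t ⟨hst, le_rfl⟩).le, hGt.le⟩
  have hsplit : ∫ τ in s..t, exp (c * τ) * (h τ + ε)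
      = (∫ τ in s..t, exp (c * τ) * h τ) + ε * C := by
    simp_rw [mul_add]
    rw [intervalIntegral.integral_add ((hh.continuous_mul (by fun_prop)).intervalIntegrable s t)
      ((by fun_prop : Continuous fun τ => exp (c * τ) * ε).intervalIntegrable s t),
      intervalIntegral.integral_mul_const, mul_comm]
  calc exp (c * t) * √(G t) ≤ exp (c * t) * Φ t := by gcongr
    _ = A + ∫ τ in s..t, exp (c * τ) * (h τ + ε) := dampedPrimitive.exp_mul_apply t
    _ = _ := by rw [hsplit]; ring

theorem le_one_add_one_div_mul_of_exp_mul_le {a b x H : ℝ} (ha : 0 < a) (hH : 0 ≤ H)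
    (h : exp (b + a) * x ≤ exp b * x + exp (b + a) * H) : x ≤ (1 + 1 / a) * H := by
  have hE : a + 1 ≤ exp a := add_one_le_exp a
  have hcycle : (exp a - 1) * x ≤ exp a * H := by
    refine le_of_mul_le_mul_left ?_ (exp_pos b)
    rw [exp_add] at h
    linear_combination h
  have hE1 : 0 < exp a - 1 := by linarith
  calc x ≤ exp a * H / (exp a - 1) := (le_div_iff₀ hE1).mpr (by linarith)
    _ = H + H / (exp a - 1) := by field_simp; ring
    _ ≤ H + H / a := by gcongr; linarith
    _ = (1 + 1 / a) * H := by ring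

theorem periodic_gronwall_sqrt_bound_general
    (T c : ℝ) (hT : 0 < T) (hc : 0 < c)
    (G h : ℝ → ℝ)
    (hG_cont : Continuous G)
    (hG_per : ∀ t, G (t + T) = G t)
    (hh_nonneg : ∀ t, 0 ≤ h t) (hh_per : ∀ t, h (t + T) = h t)
    (hh_int : IntervalIntegrable h volume 0 T)
    (hineq : ∀ s t : ℝ, s ≤ t →
      G t ≤ G s + ∫ τ in s..t, (2 * Real.sqrt (G τ) * h τ - 2 * c * G τ)) :
    ∀ t, Real.sqrt (G t) ≤ (1 + 1 / (c * T)) * ∫ τ in (0:ℝ)..T, h τ := by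
  intro t
  have hh_per' : Function.Periodic h T := hh_per
  have hh_loc : LocallyIntegrable h volume :=
    locallyIntegrable_of_forall_intervalIntegrable (hh_per'.intervalIntegrable₀ hT.ne' hh_int)
  have hforce : ∫ τ in t..t + T, exp (c * τ) * h τ ≤ exp (c * t + c * T) * ∫ τ in 0..T, h τ := by
    have hperiod : ∫ τ in t..t + T, h τ = ∫ τ in 0..T, h τ := by
      simpa using hh_per'.intervalIntegral_add_eq t 0
    rw [← hperiod, ← intervalIntegral.integral_const_mul]
    refine intervalIntegral.integral_mono_on (by linarith)
      ((hh_loc.continuous_mul (by fun_prop)).intervalIntegrable _ _)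
      ((hh_loc.intervalIntegrable _ _).const_mul _) fun τ hτ => ?_
    gcongr
    · exact hh_nonneg τ
    · rw [← mul_add]; exact mul_le_mul_of_nonneg_left hτ.2 hc.le
  have hgronwall := exp_mul_sqrt_le_add_integral hG_cont hh_loc hh_nonneg hineq
    (le_add_of_nonneg_right hT.le : t ≤ t + T)
  rw [hG_per, mul_add] at hgronwall
  exact le_one_add_one_div_mul_of_exp_mul_le (mul_pos hc hT)
    (intervalIntegral.integral_nonneg hT.le fun τ _ => hh_nonneg τ) (hgronwall.trans (by linarith))

/-- Periodic Gronwall-type estimate for the square root of the modified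
energy: if a continuous nonnegative `T`-periodic `G` satisfies
`G(t) ≤ G(s) + ∫ₛᵗ (2√G h − 2c G)` for all `s ≤ t`, with `h ≥ 0` `T`-periodic and
integrable on `[0,T]`, then `√(G(t)) ≤ (1 + 1/(cT)) ∫₀ᵀ h` for every `t`. -/
theorem periodic_gronwall_sqrt_bound
    (T c : ℝ) (hT : 0 < T) (hc : 0 < c)
    (G h : ℝ → ℝ)
    (hG_cont : Continuous G) (hG_nonneg : ∀ t, 0 ≤ G t)
    (hG_per : ∀ t, G (t + T) = G t)
    (hh_nonneg : ∀ t, 0 ≤ h t) (hh_per : ∀ t, h (t + T) = h t)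
    (hh_int : IntervalIntegrable h volume 0 T)
    (hineq : ∀ s t : ℝ, s ≤ t →
      G t ≤ G s + ∫ τ in s..t, (2 * Real.sqrt (G τ) * h τ - 2 * c * G τ)) :
    ∀ t, Real.sqrt (G t) ≤ (1 + 1 / (c * T)) * ∫ τ in (0:ℝ)..T, h τ :=
  periodic_gronwall_sqrt_bound_general T c hT hc G h hG_cont hG_per hh_nonneg hh_per hh_int hineq
end
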